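/- Suppose n = 2m, m̄ = m + 1, and z_m = i t, z_{m̄} = −i t. Then det(2x·1_n − H/t) = U_m(x)² for all x ∈ ℂ, and the set of eigenvalues of H is exactly { 2t cos(jπ/(m+1)) : j = 1, …, m }, each eigenvalue having algebraic multiplicity two. -/

import Mathlib

/-
Dividing by `t`, the matrix `2x·1 − H/t` is tridiagonal with `−1` off the diagonal and
diagonal `2x`, except for `2x − i` and `2x + i` at the two middle sites. Its leading principal
minors `D k` obey the three-term recurrence `D (k+2) = d (k+1) · D (k+1) − D k`, which away
from the defects is the Chebyshev recurrence. Hence `D k = U_k(x)` before the defects,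
`D m = U_m − i U_{m−1}`, and the free tail gives `D (2m) = U_{m−1} D (m+1) − U_{m−2} D m`,
which collapses to `(U_m − i U_{m−1})(U_m + i U_{m−1}) − U_{m−1}² = U_m²`. So
`charpoly H (μ) = t^{2m} U_m(μ/2t)²`, and the simple roots `cos (jπ/(m+1))` of `U_m` give the
eigenvalues `2t cos (jπ/(m+1))`, each a double root of the characteristic polynomial.
-/

open Matrix Complex Polynomial

/-- The uniform `n`-site open chain with hopping `t` and defect potentials
`zm` at site `m` and `zmb` at the mirror site `m̄ = n+1−m` (1-based sites). -/
noncomputable def Hu (n m : ℕ) (t : ℝ) (zm zmb : ℂ) : Matrix (Fin n) (Fin n) ℂ :=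
  fun i j =>
    if (i : ℕ) = (j : ℕ) then
      (if (i : ℕ) + 1 = m then zm else if (i : ℕ) + 1 = n + 1 - m then zmb else 0)
    else if (i : ℕ) + 1 = (j : ℕ) ∨ (j : ℕ) + 1 = (i : ℕ) then (t : ℂ)
    else 0

open Polynomial.Chebyshev (U)

noncomputable def continuantMatrix {R : Type*} [CommRing R] (d : ℕ → R) (k : ℕ) :
    Matrix (Fin k) (Fin k) R :=
  Matrix.of fun i j =>
    if (i : ℕ) = j then d i else if (i : ℕ) + 1 = j ∨ (j : ℕ) + 1 = i then -1 else 0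

namespace continuantMatrix
variable {R : Type*} [CommRing R] (d : ℕ → R)

theorem apply_eq_zero {k : ℕ} {i j : Fin k} (h : (i : ℕ) + 1 < j ∨ (j : ℕ) + 1 < i) :
    continuantMatrix d k i j = 0 := by
  simp only [continuantMatrix, of_apply]
  rw [if_neg (by omega), if_neg (by omega)]

theorem det_one : (continuantMatrix d 1).det = d 0 := by
  simp [continuantMatrix]

theorem submatrix_castSucc (k : ℕ) :
    (continuantMatrix d (k + 1)).submatrix Fin.castSucc Fin.castSucc = continuantMatrix d k := by
  ext i j
  simp [continuantMatrix]

theorem det_submatrix_castSucc_succAbove (k : ℕ) :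
    ((continuantMatrix d (k + 2)).submatrix Fin.castSucc
      (Fin.last k).castSucc.succAbove).det = -(continuantMatrix d k).det := by
  have hminor : ((continuantMatrix d (k + 2)).submatrix Fin.castSucc
      (Fin.last k).castSucc.succAbove).submatrix Fin.castSucc Fin.castSucc =
      continuantMatrix d k := by
    ext i j
    simp [continuantMatrix, Fin.succAbove_of_castSucc_lt _ _ (Fin.castSucc_lt_last j)]
  rw [det_succ_column _ (Fin.last _), Fin.sum_univ_castSucc,
    Finset.sum_eq_zero (fun i _ => by
      rw [submatrix_apply, Fin.succAbove_castSucc_self, Fin.succ_last,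
        apply_eq_zero _ (by simp)]
      simp), zero_add, Fin.succAbove_last, hminor]
  simp [continuantMatrix]

theorem det_add_two (k : ℕ) :
    (continuantMatrix d (k + 2)).det =
      d (k + 1) * (continuantMatrix d (k + 1)).det - (continuantMatrix d k).det := by
  rw [det_succ_row _ (Fin.last _), Fin.sum_univ_castSucc, Fin.sum_univ_castSucc,
    Finset.sum_eq_zero (fun j _ => by rw [apply_eq_zero _ (by simp)]; simp), zero_add,
    Fin.succAbove_last, det_submatrix_castSucc_succAbove, submatrix_castSucc]
  have h_sub : continuantMatrix d (k + 2) (Fin.last _) (Fin.last k).castSucc = -1 := by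
    simp [continuantMatrix]
  have h_diag : continuantMatrix d (k + 2) (Fin.last _) (Fin.last _) = d (k + 1) := by
    simp [continuantMatrix]
  rw [h_sub, h_diag]
  simp [show k + 1 + k = 2 * k + 1 by ring, show k + 1 + (k + 1) = 2 * (k + 1) by ring,
    pow_succ, pow_mul]
  ring

theorem det_eq_eval_U {x : R} {k : ℕ} (hd : ∀ i < k, d i = 2 * x) :
    (continuantMatrix d k).det = (U R k).eval x := by
  induction k using Nat.twoStepInduction with
  | zero => simp
  | one => rw [det_one, hd 0 one_pos]; simp
  | more k ih₁ ih₂ =>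
    rw [det_add_two, ih₁ fun i hi => hd i (by omega), ih₂ fun i hi => hd i (by omega),
      hd (k + 1) (by omega)]
    push_cast
    simp [Chebyshev.U_add_two]

theorem det_succ_eq {x : R} {k : ℕ} (hd : ∀ i < k, d i = 2 * x) :
    (continuantMatrix d (k + 1)).det = d k * (U R k).eval x - (U R (k - 1)).eval x := by
  cases k with
  | zero => rw [det_one]; simp
  | succ k =>
    rw [det_add_two, det_eq_eval_U d hd, det_eq_eval_U d fun i hi => hd i (by omega)]
    push_cast
    simp

end continuantMatrix

theorem eq_eval_U_mul_sub_of_recurrence {R : Type*} [CommRing R] (x : R) (G : ℕ → R) {a N : ℕ}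
    (hG : ∀ k, a ≤ k → k + 2 ≤ N → G (k + 2) = 2 * x * G (k + 1) - G k) {j : ℕ}
    (hj : a + j + 1 ≤ N) :
    G (a + j + 1) = (U R j).eval x * G (a + 1) - (U R (j - 1)).eval x * G a := by
  induction j using Nat.twoStepInduction with
  | zero => simp
  | one => simp [hG a le_rfl (by omega)]
  | more j ih₁ ih₂ =>
    have hU₁ : (U R ((j : ℤ) + 1)).eval x = 2 * x * (U R j).eval x - (U R (j - 1)).eval x := by
      simp [Chebyshev.U_add_one]
    have hU₂ : (U R ((j : ℤ) + 2)).eval x = 2 * x * (U R (j + 1)).eval x - (U R j).eval x := by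
      simp [Chebyshev.U_add_two]
    rw [show a + (j + 2) + 1 = a + j + 1 + 2 by ring, hG (a + j + 1) (by omega) (by omega),
      ih₁ (by omega), show a + j + 1 + 1 = a + (j + 1) + 1 by ring, ih₂ (by omega)]
    push_cast
    rw [show (j : ℤ) + 2 - 1 = j + 1 by ring, add_sub_cancel_right]
    linear_combination (-G (a + 1)) * hU₂ + G a * hU₁

/-- Indices are 0-based: `m − 1` and `m` are the sites `m` and `m̄ = m + 1` of a chain of
length `2m`. -/
noncomputable def defectDiag {R : Type*} [CommRing R] (x a b : R) (m : ℕ) (i : ℕ) : R :=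
  2 * x - if i + 1 = m then a else if i = m then b else 0

section defectDiag
variable {R : Type*} [CommRing R] (x a b : R)

theorem defectDiag_eq_of_ne {m i : ℕ} (h₁ : i + 1 ≠ m) (h₂ : i ≠ m) :
    defectDiag x a b m i = 2 * x := by
  simp [defectDiag, h₁, h₂]

@[simp] theorem defectDiag_pred (k : ℕ) : defectDiag x a b (k + 1) k = 2 * x - a := by
  simp [defectDiag]

@[simp] theorem defectDiag_self (m : ℕ) : defectDiag x a b m m = 2 * x - b := by
  simp [defectDiag]

theorem det_continuantMatrix_defectDiag (m : ℕ) :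
    (continuantMatrix (defectDiag x a b m) (2 * m)).det =
      ((U R m).eval x - a * (U R (m - 1)).eval x) * ((U R m).eval x - b * (U R (m - 1)).eval x)
        - (U R (m - 1)).eval x ^ 2 := by
  cases m with
  | zero => simp
  | succ k =>
    set d := defectDiag x a b (k + 1)
    set D : ℕ → R := fun j => (continuantMatrix d j).det
    have hd_lt : ∀ i < k, d i = 2 * x := fun i hi =>
      defectDiag_eq_of_ne x a b (by omega) (by omega)
    have hd_gt : ∀ i, k + 1 < i → d i = 2 * x := fun i hi =>
      defectDiag_eq_of_ne x a b (by omega) (by omega)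
    have hD_pred : D k = (U R k).eval x := continuantMatrix.det_eq_eval_U d hd_lt
    have hD_mid : D (k + 1) = (2 * x - a) * (U R k).eval x - (U R (k - 1)).eval x := by
      simp [D, continuantMatrix.det_succ_eq d hd_lt, d]
    have hD_succ : D (k + 2) = (2 * x - b) * D (k + 1) - D k := by
      simp [D, continuantMatrix.det_add_two, d]
    have hD_tail : D (k + 1 + k + 1) =
        (U R k).eval x * D (k + 2) - (U R (k - 1)).eval x * D (k + 1) :=
      eq_eval_U_mul_sub_of_recurrence x D (N := 2 * (k + 1))
        (fun j _ hj => by simp [D, continuantMatrix.det_add_two, hd_gt (j + 1) (by omega)])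
        (by omega)
    have hU : (U R ((k : ℤ) + 1)).eval x = 2 * x * (U R k).eval x - (U R (k - 1)).eval x := by
      simp [Chebyshev.U_add_one]
    change D (2 * (k + 1)) = _
    rw [show 2 * (k + 1) = k + 1 + k + 1 by ring, hD_tail, hD_succ, hD_mid, hD_pred]
    push_cast
    rw [add_sub_cancel_right, hU]
    ring

end defectDiag

section
variable {K ι : Type*} [Field K] [Fintype ι] [DecidableEq ι] {A : Matrix ι ι K} {c : K}
  {p : K[X]}

theorem Matrix.roots_charpoly_of_eq_C_mul_sq (h : A.charpoly = C c * p ^ 2) :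
    A.charpoly.roots = 2 • p.roots := by
  have hne : C c * p ^ 2 ≠ 0 := h ▸ A.charpoly_monic.ne_zero
  rw [h, roots_C_mul _ (by rintro rfl; simp at hne), roots_pow]

theorem Matrix.spectrum_eq_of_charpoly_eq_C_mul_sq (h : A.charpoly = C c * p ^ 2) :
    spectrum K A = {μ | μ ∈ p.roots} := by
  ext μ
  rw [mem_spectrum_iff_isRoot_charpoly, ← mem_roots A.charpoly_monic.ne_zero,
    roots_charpoly_of_eq_C_mul_sq h, Multiset.mem_nsmul, Set.mem_ofPred_eq]
  exact and_iff_right two_ne_zero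

theorem Matrix.rootMultiplicity_charpoly_of_eq_C_mul_sq (h : A.charpoly = C c * p ^ 2)
    (hp : p.roots.Nodup) {μ : K} (hμ : μ ∈ spectrum K A) :
    A.charpoly.rootMultiplicity μ = 2 := by
  classical
  rw [spectrum_eq_of_charpoly_eq_C_mul_sq h] at hμ
  rw [← count_roots, roots_charpoly_of_eq_C_mul_sq h, Multiset.count_nsmul,
    Multiset.count_eq_one_of_mem hp hμ]

end

theorem Polynomial.roots_comp_C_inv_mul_X {K : Type*} [Field K] (p : K[X]) {s : K} (hs : s ≠ 0) :
    (p.comp (C s⁻¹ * X)).roots = p.roots.map (s * ·) := by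
  simpa using roots_comp_C_mul_X_add_C p s⁻¹ 0 (isUnit_iff_ne_zero.mpr (inv_ne_zero hs))

theorem Polynomial.Chebyshev.roots_U_complex (m : ℕ) :
    (U ℂ m).roots = (U ℝ m).roots.map (↑) := by
  have hcard : Multiset.card (U ℝ m).roots = (U ℝ m).natDegree := by
    rw [roots_U_real, natDegree_U_natCast, Finset.image_val, Finset.range_val,
      Multiset.dedup_eq_self.mpr (roots_U_real_nodup m)]
    simp
  rw [← map_U ofRealHom, ← roots_map_of_injective_of_card_eq_natDegree ofReal_injective hcard]
  rfl

theorem roots_U_comp_C_inv_mul_X (m : ℕ) {s : ℂ} (hs : s ≠ 0) :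
    ((U ℂ m).comp (C s⁻¹ * X)).roots = ((U ℝ m).roots.map (↑)).map (s * ·) := by
  rw [roots_comp_C_inv_mul_X _ hs, Chebyshev.roots_U_complex]

theorem smul_one_sub_inv_smul_Hu (m : ℕ) {t : ℝ} (ht : t ≠ 0) (zm zmb x : ℂ) :
    (2 * x) • (1 : Matrix (Fin (2 * m)) (Fin (2 * m)) ℂ) -
        (t : ℂ)⁻¹ • Hu (2 * m) m t zm zmb =
      continuantMatrix (defectDiag x (zm / t) (zmb / t) m) (2 * m) := by
  have ht' : (t : ℂ) ≠ 0 := ofReal_ne_zero.mpr ht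
  ext i j
  simp only [Hu, continuantMatrix, defectDiag, Matrix.sub_apply, Matrix.smul_apply, one_apply,
    of_apply, smul_eq_mul, Fin.ext_iff, show 2 * m + 1 - m = m + 1 by omega]
  split_ifs <;> first | omega | (field_simp <;> ring)

theorem det_smul_one_sub_inv_smul_Hu (m : ℕ) {t : ℝ} (ht : t ≠ 0) (x : ℂ) :
    ((2 * x) • (1 : Matrix (Fin (2 * m)) (Fin (2 * m)) ℂ) -
        (t : ℂ)⁻¹ • Hu (2 * m) m t (I * t) (-(I * t))).det = (U ℂ m).eval x ^ 2 := by
  have ht' : (t : ℂ) ≠ 0 := ofReal_ne_zero.mpr ht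
  rw [smul_one_sub_inv_smul_Hu m ht, det_continuantMatrix_defectDiag,
    mul_div_cancel_right₀ _ ht', neg_div, mul_div_cancel_right₀ _ ht']
  linear_combination (-(U ℂ (m - 1)).eval x ^ 2) * I_sq

theorem charpoly_Hu (m : ℕ) {t : ℝ} (ht : t ≠ 0) :
    (Hu (2 * m) m t (I * t) (-(I * t))).charpoly =
      C ((t : ℂ) ^ (2 * m)) * ((U ℂ m).comp (C (2 * (t : ℂ))⁻¹ * X)) ^ 2 := by
  have ht' : (t : ℂ) ≠ 0 := ofReal_ne_zero.mpr ht
  refine Polynomial.funext fun μ => ?_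
  set H := Hu (2 * m) m t (I * t) (-(I * t))
  have hscale : scalar (Fin (2 * m)) μ - H =
      (t : ℂ) • ((2 * ((2 * (t : ℂ))⁻¹ * μ)) • (1 : Matrix _ _ ℂ) -
        (t : ℂ)⁻¹ • H) := by
    rw [smul_sub, smul_smul, smul_smul, mul_inv_cancel₀ ht', one_smul,
      show (t : ℂ) * (2 * ((2 * (t : ℂ))⁻¹ * μ)) = μ by field_simp, smul_one_eq_diagonal]
    rfl
  rw [eval_charpoly, hscale, det_smul, det_smul_one_sub_inv_smul_Hu m ht]
  simp

theorem spectrum_Hu (m : ℕ) {t : ℝ} (ht : t ≠ 0) :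
    spectrum ℂ (Hu (2 * m) m t (I * t) (-(I * t))) =
      (fun j : ℕ => ((2 * t * Real.cos (j * Real.pi / (m + 1)) : ℝ) : ℂ)) '' Set.Icc 1 m := by
  have h2t : 2 * (t : ℂ) ≠ 0 := by exact_mod_cast mul_ne_zero two_ne_zero ht
  rw [spectrum_eq_of_charpoly_eq_C_mul_sq (charpoly_Hu m ht), roots_U_comp_C_inv_mul_X m h2t,
    Chebyshev.roots_U_real]
  ext μ
  simp only [Finset.image_val, Finset.range_val, Multiset.map_map, Function.comp_apply,
    Multiset.mem_map, Multiset.mem_dedup, Multiset.mem_range, exists_exists_and_eq_and,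
    ofReal_cos, ofReal_div, ofReal_mul, ofReal_add, ofReal_natCast, ofReal_one, ofReal_ofNat,
    Set.mem_ofPred_eq, Set.mem_image, Set.mem_Icc]
  constructor
  · rintro ⟨k, hk, rfl⟩
    exact ⟨k + 1, ⟨by omega, by omega⟩, by push_cast; ring_nf⟩
  · rintro ⟨j, ⟨hj₁, hj₂⟩, rfl⟩
    refine ⟨j - 1, by omega, ?_⟩
    rw [Nat.cast_sub hj₁]
    push_cast
    ring_nf

theorem rootMultiplicity_charpoly_Hu (m : ℕ) {t : ℝ} (ht : t ≠ 0) {μ : ℂ}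
    (hμ : μ ∈ spectrum ℂ (Hu (2 * m) m t (I * t) (-(I * t)))) :
    (Hu (2 * m) m t (I * t) (-(I * t))).charpoly.rootMultiplicity μ = 2 := by
  have h2t : 2 * (t : ℂ) ≠ 0 := by exact_mod_cast mul_ne_zero two_ne_zero ht
  refine rootMultiplicity_charpoly_of_eq_C_mul_sq (charpoly_Hu m ht) ?_ hμ
  rw [roots_U_comp_C_inv_mul_X m h2t, Chebyshev.roots_U_real]
  exact ((Finset.nodup _).map ofReal_injective).map (mul_right_injective₀ h2t)

theorem stmt12 (n m : ℕ)
    (t : ℝ) (ht : 0 < t) (zm zmb : ℂ)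
    (hnm : n = 2*m)
    (hzm : zm = Complex.I * (t : ℂ)) (hzmb : zmb = -(Complex.I * (t : ℂ))) :
    (∀ x : ℂ,
      Matrix.det ((2*x) • (1 : Matrix (Fin n) (Fin n) ℂ) - (t : ℂ)⁻¹ • Hu n m t zm zmb) =
        ((Chebyshev.U ℂ (m : ℤ)).eval x)^2) ∧
    spectrum ℂ (Hu n m t zm zmb) =
      (fun j : ℕ => ((2 * t * Real.cos (j * Real.pi / (m + 1)) : ℝ) : ℂ)) '' (Set.Icc 1 m) ∧
    (∀ μ ∈ spectrum ℂ (Hu n m t zm zmb),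
      (Hu n m t zm zmb).charpoly.rootMultiplicity μ = 2) := by
  subst hnm hzm hzmb
  exact ⟨det_smul_one_sub_inv_smul_Hu m ht.ne', spectrum_Hu m ht.ne',
    fun μ => rootMultiplicity_charpoly_Hu m ht.ne'⟩
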